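/- For all odd positive integers r and s, there exists a bijection f : ℕ → ℤ that avoids (r⁴, r³s, r²s², rs³, s⁴) 6-progressions; that is, there are no indices i₁ < i₂ < ⋯ < i₆ and nonzero integer d such that f(i₂) = f(i₁) + r⁴·d, f(i₃) = f(i₂) + r³s·d, f(i₄) = f(i₃) + r²s²·d, f(i₅) = f(i₄) + rs³·d, and f(i₆) = f(i₅) + s⁴·d. -/

import Mathlib

/-! Enumerate `ℤ` in increasing order of an injective key `ℤ → ℕ`. The integers are cut into
blocks `|x| < 2 ^ (β (k + 1))` of rapidly growing size, listed one after the other; inside a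
block, `x` is ordered by the bit reversal of its offset `x + 2 ^ (β (k + 1))`. In bit-reversal
order, `x` and `x + 2 ^ v * o` with `o` odd compare according to bit `v` of `x` alone, so a
block never contains an increasing triple `x, x + 2 ^ v * o₁, x + 2 ^ v * (o₁ + o₂)` with `o₁, o₂`
odd. In a progression, `|d|` is at most the first step, so once `2 ^ β` beats the sum of the
last four weights, the last five terms meet at most two consecutive blocks; hence three
consecutive terms with odd steps `r³s d, r²s² d` or `rs³ d, s⁴ d` share a block. -/

theorem Int.exists_eq_two_pow_mul_odd {d : ℤ} (hd : d ≠ 0) :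
    ∃ (v : ℕ) (o : ℤ), Odd o ∧ d = 2 ^ v * o := by
  obtain ⟨v, c, hc, hdc⟩ := Nat.exists_eq_two_pow_mul_odd (Int.natAbs_ne_zero.2 hd)
  have hc' : Odd (c : ℤ) := (Int.odd_coe_nat c).2 hc
  rcases Int.natAbs_eq d with h | h
  · exact ⟨v, c, hc', by rw [h, hdc]; push_cast; ring⟩
  · exact ⟨v, -c, hc'.neg, by rw [h, hdc]; push_cast; ring⟩

theorem exists_bijective_strictMono_comp {α : Type*} [Infinite α] {g : α → ℕ}
    (hg : Function.Injective g) : ∃ f : ℕ → α, Function.Bijective f ∧ StrictMono (g ∘ f) := by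
  have : Infinite (Set.range g) := (Set.infinite_range_of_injective hg).to_subtype
  let e := (Nat.Subtype.orderIsoOfNat (Set.range g)).toEquiv.trans (Equiv.ofInjective g hg).symm
  refine ⟨e, e.bijective, fun i j hij => ?_⟩
  simp only [e, Function.comp_apply, Equiv.trans_apply, Equiv.apply_ofInjective_symm]
  exact (Nat.Subtype.orderIsoOfNat _).strictMono hij

theorem Nat.mod_two_pow_eq_and_bit_ne {v p q : ℕ} {o : ℤ} (ho : Odd o)
    (h : (q : ℤ) = p + 2 ^ v * o) :
    p % 2 ^ v = q % 2 ^ v ∧ p / 2 ^ v % 2 ≠ q / 2 ^ v % 2 := by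
  have h0 : (2 : ℤ) ^ v ≠ 0 := by positivity
  have hmod : (q : ℤ) % 2 ^ v = p % 2 ^ v := by rw [h, Int.add_mul_emod_self_left]
  have hdiv : (q : ℤ) / 2 ^ v = p / 2 ^ v + o := by rw [h, Int.add_mul_ediv_left _ _ h0]
  obtain ⟨k, rfl⟩ := ho
  constructor
  · exact_mod_cast hmod.symm
  · intro hpq
    have : ((p / 2 ^ v % 2 : ℕ) : ℤ) = ((q / 2 ^ v % 2 : ℕ) : ℤ) := congrArg _ hpq
    push_cast at this
    omega

def bitRev : ℕ → ℕ → ℕ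
  | 0, _ => 0
  | m + 1, u => u % 2 * 2 ^ m + bitRev m (u / 2)

namespace bitRev

theorem lt_two_pow (m u : ℕ) : bitRev m u < 2 ^ m := by
  induction m generalizing u with
  | zero => simp [bitRev]
  | succ m ih =>
    have := ih (u / 2)
    have : u % 2 * 2 ^ m ≤ 1 * 2 ^ m := Nat.mul_le_mul_right _ (by omega)
    rw [bitRev, pow_succ]
    omega

theorem injOn_Iio (m : ℕ) : Set.InjOn (bitRev m) (Set.Iio (2 ^ m)) := by
  intro p hp q hq h
  rw [Set.mem_Iio] at hp hq
  induction m generalizing p q with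
  | zero => simp_all
  | succ m ih =>
    rw [pow_succ] at hp hq
    have hp' := lt_two_pow m (p / 2)
    have hq' := lt_two_pow m (q / 2)
    simp only [bitRev] at h
    have hmod : p % 2 = q % 2 := by
      rcases Nat.mod_two_eq_zero_or_one p with h0 | h0 <;>
        rcases Nat.mod_two_eq_zero_or_one q with h1 | h1 <;> rw [h0, h1] at h <;> omega
    have : p / 2 = q / 2 := ih (by omega) (by omega) (by rw [hmod] at h; omega)
    omega

/-- Bit reversal turns the lowest differing bit into the leading one. -/
theorem lt_of_mod_eq {m v p q : ℕ} (hp : p < 2 ^ m) (hq : q < 2 ^ m)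
    (hmod : p % 2 ^ v = q % 2 ^ v) (hpv : p / 2 ^ v % 2 = 0) (hqv : q / 2 ^ v % 2 = 1) :
    bitRev m p < bitRev m q := by
  induction v generalizing m p q with
  | zero =>
    cases m with
    | zero => simp_all
    | succ m =>
      simp only [pow_zero, Nat.div_one] at hpv hqv
      have := lt_two_pow m (p / 2)
      simp only [bitRev, hpv, hqv]
      omega
  | succ v ih =>
    cases m with
    | zero => simp_all
    | succ m =>
      rw [pow_succ'] at hmod hp hq
      have h2 : p % 2 = q % 2 := by
        rw [← Nat.mod_mod_of_dvd p (dvd_mul_right 2 (2 ^ v)),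
          ← Nat.mod_mod_of_dvd q (dvd_mul_right 2 (2 ^ v)), hmod]
      have hmod' : p / 2 % 2 ^ v = q / 2 % 2 ^ v := by
        rw [← Nat.mod_mul_right_div_self, ← Nat.mod_mul_right_div_self, hmod]
      rw [pow_succ', ← Nat.div_div_eq_div_mul] at hpv hqv
      have := ih (m := m) (by omega) (by omega) hmod' hpv hqv
      simp only [bitRev, h2]
      omega

theorem lt_iff {m v p q : ℕ} {o : ℤ} (hp : p < 2 ^ m) (hq : q < 2 ^ m) (ho : Odd o)
    (h : (q : ℤ) = p + 2 ^ v * o) : bitRev m p < bitRev m q ↔ p / 2 ^ v % 2 = 0 := by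
  obtain ⟨hmod, hne⟩ := Nat.mod_two_pow_eq_and_bit_ne ho h
  constructor
  · intro hlt
    by_contra hpv
    exact (lt_of_mod_eq hq hp hmod.symm (by omega) (by omega)).not_gt hlt
  · intro hpv
    exact lt_of_mod_eq hp hq hmod hpv (by omega)

theorem not_lt_lt {m v a b c : ℕ} {o₁ o₂ : ℤ} (ha : a < 2 ^ m) (hb : b < 2 ^ m)
    (hc : c < 2 ^ m) (ho₁ : Odd o₁) (ho₂ : Odd o₂) (hab : (b : ℤ) = a + 2 ^ v * o₁)
    (hbc : (c : ℤ) = b + 2 ^ v * o₂) : ¬ (bitRev m a < bitRev m b ∧ bitRev m b < bitRev m c) := by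
  rintro ⟨h₁, h₂⟩
  have ha₀ := (lt_iff ha hb ho₁ hab).1 h₁
  have hb₀ := (lt_iff hb hc ho₂ hbc).1 h₂
  have := (Nat.mod_two_pow_eq_and_bit_ne ho₁ hab).2
  omega

end bitRev

def blockIdx (β : ℕ) (x : ℤ) : ℕ := Nat.log 2 x.natAbs / β

def blockWidth (β : ℕ) (x : ℤ) : ℕ := β * (blockIdx β x + 1) + 1

def blockOffset (β : ℕ) (x : ℤ) : ℕ := (x + 2 ^ (β * (blockIdx β x + 1))).toNat

-- The leading `2 ^ blockWidth β x` exceeds every bit-reversed offset, so blocks come in order.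
def blockKey (β : ℕ) (x : ℤ) : ℕ := 2 ^ blockWidth β x + bitRev (blockWidth β x) (blockOffset β x)

section Blocks

variable {β : ℕ}

theorem blockIdx_le_iff (hβ : 0 < β) (x : ℤ) (k : ℕ) :
    blockIdx β x ≤ k ↔ |x| < 2 ^ (β * (k + 1)) := by
  have hlog : blockIdx β x ≤ k ↔ Nat.log 2 x.natAbs < β * (k + 1) := by
    rw [blockIdx, ← Nat.lt_succ_iff, Nat.div_lt_iff_lt_mul hβ, mul_comm]
  rw [hlog, Int.abs_eq_natAbs]
  norm_cast
  rcases eq_or_ne x.natAbs 0 with h0 | h0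
  · simp only [h0, Nat.log_zero_right]
    exact iff_of_true (by positivity) (by positivity)
  · exact Nat.log_lt_iff_lt_pow one_lt_two h0

theorem abs_lt_two_pow_blockIdx (hβ : 0 < β) (x : ℤ) : |x| < 2 ^ (β * (blockIdx β x + 1)) :=
  (blockIdx_le_iff hβ x _).1 le_rfl

theorem blockOffset_cast (hβ : 0 < β) (x : ℤ) :
    (blockOffset β x : ℤ) = x + 2 ^ (β * (blockIdx β x + 1)) := by
  have := abs_lt_two_pow_blockIdx hβ x
  rw [blockOffset, Int.toNat_of_nonneg (by linarith [neg_abs_le x])]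

theorem blockOffset_lt (hβ : 0 < β) (x : ℤ) : blockOffset β x < 2 ^ blockWidth β x := by
  have := abs_lt_two_pow_blockIdx hβ x
  have hcast := blockOffset_cast hβ x
  rw [blockWidth, pow_succ]
  zify
  linarith [le_abs_self x]

theorem blockKey_lt_of_blockIdx_lt (hβ : 0 < β) {x y : ℤ} (h : blockIdx β x < blockIdx β y) :
    blockKey β x < blockKey β y := by
  have hw : blockWidth β x + 1 ≤ blockWidth β y := by
    have := Nat.mul_le_mul_left β (show blockIdx β x + 2 ≤ blockIdx β y + 1 by omega)
    simp only [blockWidth]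
    nlinarith
  have := bitRev.lt_two_pow (blockWidth β x) (blockOffset β x)
  have := Nat.pow_le_pow_right two_pos hw
  rw [pow_succ] at this
  rw [blockKey, blockKey]
  omega

theorem blockIdx_le_of_blockKey_lt (hβ : 0 < β) {x y : ℤ} (h : blockKey β x < blockKey β y) :
    blockIdx β x ≤ blockIdx β y :=
  not_lt.1 fun h' => (blockKey_lt_of_blockIdx_lt hβ h').not_gt h

theorem blockKey_lt_iff_of_blockIdx_eq {x y : ℤ} (h : blockIdx β x = blockIdx β y) :
    blockKey β x < blockKey β y ↔
      bitRev (blockWidth β x) (blockOffset β x) < bitRev (blockWidth β x) (blockOffset β y) := by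
  rw [blockKey, blockKey, show blockWidth β y = blockWidth β x by rw [blockWidth, blockWidth, h]]
  omega

theorem blockKey_injective (hβ : 0 < β) : Function.Injective (blockKey β) := by
  intro x y hxy
  have hidx : blockIdx β x = blockIdx β y := by
    by_contra hne
    rcases Nat.lt_or_gt_of_ne hne with h | h
    · exact (blockKey_lt_of_blockIdx_lt hβ h).ne hxy
    · exact (blockKey_lt_of_blockIdx_lt hβ h).ne' hxy
  have hw : blockWidth β y = blockWidth β x := by rw [blockWidth, blockWidth, hidx]
  have hoff : blockOffset β x = blockOffset β y := by
    refine bitRev.injOn_Iio _ (blockOffset_lt hβ x) (hw ▸ blockOffset_lt hβ y) ?_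
    rw [blockKey, blockKey, hw] at hxy
    omega
  have := blockOffset_cast hβ x
  have := blockOffset_cast hβ y
  rw [hidx] at *
  omega

theorem not_blockKey_lt_lt_of_blockIdx_eq (hβ : 0 < β) {v : ℕ} {x y z o₁ o₂ : ℤ}
    (ho₁ : Odd o₁) (ho₂ : Odd o₂) (hxy : y = x + 2 ^ v * o₁) (hyz : z = y + 2 ^ v * o₂)
    (hx : blockIdx β x = blockIdx β y) (hz : blockIdx β z = blockIdx β y) :
    ¬ (blockKey β x < blockKey β y ∧ blockKey β y < blockKey β z) := by
  have hw : ∀ t, blockIdx β t = blockIdx β y → blockWidth β t = blockWidth β y := by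
    intro t ht
    rw [blockWidth, blockWidth, ht]
  rw [blockKey_lt_iff_of_blockIdx_eq hx, blockKey_lt_iff_of_blockIdx_eq hz.symm, hw x hx]
  refine bitRev.not_lt_lt (v := v) (blockOffset_lt hβ x |>.trans_eq (by rw [hw x hx]))
    (blockOffset_lt hβ y) (blockOffset_lt hβ z |>.trans_eq (by rw [hw z hz])) ho₁ ho₂ ?_ ?_
  · rw [blockOffset_cast hβ, blockOffset_cast hβ, hx]
    linear_combination hxy
  · rw [blockOffset_cast hβ, blockOffset_cast hβ, hz]
    linear_combination hyz

theorem blockIdx_le_succ_of_abs_sub_le {C : ℕ} (hβ : 0 < β) (hC : 2 * C + 1 ≤ 2 ^ β)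
    {x y z : ℤ} (hxy : blockIdx β x ≤ blockIdx β y) (hz : |z - y| ≤ C * |y - x|) :
    blockIdx β z ≤ blockIdx β y + 1 := by
  set T : ℤ := 2 ^ (β * (blockIdx β y + 1))
  have hx : |x| < T := (blockIdx_le_iff hβ x _).1 hxy
  have hy : |y| < T := abs_lt_two_pow_blockIdx hβ y
  have hC' : (2 * C + 1 : ℤ) ≤ 2 ^ β := by exact_mod_cast hC
  rw [blockIdx_le_iff hβ, show β * (blockIdx β y + 1 + 1) = β + β * (blockIdx β y + 1) by ring,
    pow_add]
  calc |z| ≤ |y| + |z - y| := by linarith [abs_sub_abs_le_abs_sub z y]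
    _ ≤ |y| + C * (|y| + |x|) := by gcongr; exact hz.trans (by gcongr; exact abs_sub _ _)
    _ < T + C * (T + T) := add_lt_add_of_lt_of_le hy (by gcongr)
    _ = (2 * C + 1) * T := by ring
    _ ≤ 2 ^ β * T := by gcongr

end Blocks

theorem not_blockKey_chain_of_prog {β : ℕ} (hβ : 0 < β) {w₁ w₂ w₃ w₄ w₅ d : ℤ} (hw₁ : w₁ ≠ 0)
    (hw₂ : Odd w₂) (hw₃ : Odd w₃) (hw₄ : Odd w₄) (hw₅ : Odd w₅)
    (hβw : 2 * (w₂ + w₃ + w₄ + w₅).natAbs + 1 ≤ 2 ^ β) (hd : d ≠ 0) {y₁ y₂ y₃ y₄ y₅ y₆ : ℤ}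
    (h₂ : y₂ = y₁ + w₁ * d) (h₃ : y₃ = y₂ + w₂ * d) (h₄ : y₄ = y₃ + w₃ * d)
    (h₅ : y₅ = y₄ + w₄ * d) (h₆ : y₆ = y₅ + w₅ * d) :
    ¬ (blockKey β y₁ < blockKey β y₂ ∧ blockKey β y₂ < blockKey β y₃ ∧
      blockKey β y₃ < blockKey β y₄ ∧ blockKey β y₄ < blockKey β y₅ ∧
      blockKey β y₅ < blockKey β y₆) := by
  rintro ⟨k₁₂, k₂₃, k₃₄, k₄₅, k₅₆⟩
  have b₁₂ := blockIdx_le_of_blockKey_lt hβ k₁₂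
  have b₂₃ := blockIdx_le_of_blockKey_lt hβ k₂₃
  have b₃₄ := blockIdx_le_of_blockKey_lt hβ k₃₄
  have b₄₅ := blockIdx_le_of_blockKey_lt hβ k₄₅
  have b₅₆ := blockIdx_le_of_blockKey_lt hβ k₅₆
  -- `y₂, …, y₆` lie in two consecutive blocks, since the step `y₂ - y₁` already bounds `d`.
  have b₂₆ : blockIdx β y₆ ≤ blockIdx β y₂ + 1 := by
    refine blockIdx_le_succ_of_abs_sub_le hβ hβw b₁₂ ?_
    have hw₁' : 1 ≤ |w₁| := Int.one_le_abs hw₁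
    rw [show y₆ - y₂ = (w₂ + w₃ + w₄ + w₅) * d by rw [h₆, h₅, h₄, h₃]; ring,
      show y₂ - y₁ = w₁ * d by rw [h₂]; ring, Int.natCast_natAbs, abs_mul, abs_mul]
    exact mul_le_mul_of_nonneg_left (le_mul_of_one_le_left (abs_nonneg d) hw₁') (abs_nonneg _)
  obtain ⟨v, o, ho, rfl⟩ := Int.exists_eq_two_pow_mul_odd hd
  have step : ∀ {w a b : ℤ}, b = a + w * (2 ^ v * o) → b = a + 2 ^ v * (w * o) := by
    intro w a b h
    rw [h]
    ring
  rcases le_or_gt (blockIdx β y₄) (blockIdx β y₂) with h₂₄ | h₂₄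
  · exact not_blockKey_lt_lt_of_blockIdx_eq hβ (hw₂.mul ho) (hw₃.mul ho) (step h₃) (step h₄)
      (by omega) (by omega) ⟨k₂₃, k₃₄⟩
  · exact not_blockKey_lt_lt_of_blockIdx_eq hβ (hw₄.mul ho) (hw₅.mul ho) (step h₅) (step h₆)
      (by omega) (by omega) ⟨k₄₅, k₅₆⟩

theorem exists_perm_int_avoiding_gen_6prog_general (r s : ℕ)
    (hrodd : Odd r) (hsodd : Odd s) :
    ∃ f : ℕ → ℤ, Function.Bijective f ∧
      ¬ ∃ (i₁ i₂ i₃ i₄ i₅ i₆ : ℕ) (d : ℤ),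
        i₁ < i₂ ∧ i₂ < i₃ ∧ i₃ < i₄ ∧ i₄ < i₅ ∧ i₅ < i₆ ∧ d ≠ 0 ∧
        f i₂ = f i₁ + (r : ℤ) ^ 4 * d ∧
        f i₃ = f i₂ + (r : ℤ) ^ 3 * s * d ∧
        f i₄ = f i₃ + (r : ℤ) ^ 2 * (s : ℤ) ^ 2 * d ∧
        f i₅ = f i₄ + (r : ℤ) * (s : ℤ) ^ 3 * d ∧
        f i₆ = f i₅ + (s : ℤ) ^ 4 * d := by
  have hr : Odd (r : ℤ) := (Int.odd_coe_nat r).2 hrodd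
  have hs : Odd (s : ℤ) := (Int.odd_coe_nat s).2 hsodd
  have hr₀ : (r : ℤ) ≠ 0 := by exact_mod_cast hrodd.pos.ne'
  set β := 2 * ((r : ℤ) ^ 3 * s + r ^ 2 * s ^ 2 + r * s ^ 3 + s ^ 4).natAbs + 1
  have hβ : 0 < β := Nat.succ_pos _
  obtain ⟨f, hf, hmono⟩ := exists_bijective_strictMono_comp (blockKey_injective hβ)
  refine ⟨f, hf, ?_⟩
  rintro ⟨i₁, i₂, i₃, i₄, i₅, i₆, d, h₁₂, h₂₃, h₃₄, h₄₅, h₅₆, hd, e₂, e₃, e₄, e₅, e₆⟩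
  exact not_blockKey_chain_of_prog hβ (pow_ne_zero 4 hr₀) ((hr.pow).mul hs)
    ((hr.pow).mul hs.pow) (hr.mul hs.pow) hs.pow Nat.lt_two_pow_self.le hd e₂ e₃ e₄ e₅ e₆
    ⟨hmono h₁₂, hmono h₂₃, hmono h₃₄, hmono h₄₅, hmono h₅₆⟩

/-- For all odd positive integers `r` and `s`, there exists a permutation of the
integers avoiding `(r⁴, r³s, r²s², rs³, s⁴)` 6-progressions. -/
theorem exists_perm_int_avoiding_gen_6prog (r s : ℕ)
    (hrodd : Odd r) (hr : 0 < r) (hsodd : Odd s) (hs : 0 < s) :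
    ∃ f : ℕ → ℤ, Function.Bijective f ∧
      ¬ ∃ (i₁ i₂ i₃ i₄ i₅ i₆ : ℕ) (d : ℤ),
        i₁ < i₂ ∧ i₂ < i₃ ∧ i₃ < i₄ ∧ i₄ < i₅ ∧ i₅ < i₆ ∧ d ≠ 0 ∧
        f i₂ = f i₁ + (r : ℤ) ^ 4 * d ∧
        f i₃ = f i₂ + (r : ℤ) ^ 3 * s * d ∧
        f i₄ = f i₃ + (r : ℤ) ^ 2 * (s : ℤ) ^ 2 * d ∧
        f i₅ = f i₄ + (r : ℤ) * (s : ℤ) ^ 3 * d ∧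
        f i₆ = f i₅ + (s : ℤ) ^ 4 * d :=
  exists_perm_int_avoiding_gen_6prog_general r s hrodd hsodd
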